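/- arXiv:1503.06297 — 4 statements merged into one kernel-verified Lean document; each statement's English description precedes it below -/
import Mathlib

section
/- Let W act on a vector space with W-invariant symmetric bilinear form ⟨·,·⟩ and reflections s_i(v) = v − ⟨α_i∨, v⟩α_i, where ⟨α_i∨, v⟩ = 2⟨α_i, v⟩/⟨α_i, α_i⟩. Fix an expression w = s_{i_1}⋯s_{i_N}, a subset S ⊆ {1,…,N}, set u_{[j,k]}, u_{≤k}, w_{≤k}, β_j as before, and a_{jk}(λ) := ⟨α_{i_j}∨, u_{[j+1,k]}(λ)⟩. If l ∉ S, then for any weight λ and any k: ∑_{j < l, j ∉ S} ⟨β_j, β_l⟩ a_{jk}(λ) − ∑_{l < j ≤ k, j ∉ S} ⟨β_j, β_l⟩ a_{jk}(λ) = ⟨(w_{≤k} + u_{≤k})λ, β_l⟩. -/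
/-- The product of the endomorphisms `s (ι l)` over those indices `l ∈ [j,k]` that
belong to `S`, in increasing order of `l`; empty products are the identity. -/
def subProd {K V I : Type*} [Field K] [AddCommGroup V] [Module K V]
    (s : I → Module.End K V) (ι : ℕ → I) (S : Finset ℕ) (j k : ℕ) : Module.End K V :=
  (((List.range' j (k + 1 - j)).filter (fun l => l ∈ S)).map (fun l => s (ι l))).prod

/-- The full product `s_{i_j} ⋯ s_{i_k}`. -/
def fullProd {K V I : Type*} [Field K] [AddCommGroup V] [Module K V]
    (s : I → Module.End K V) (ι : ℕ → I) (j k : ℕ) : Module.End K V :=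
  ((List.range' j (k + 1 - j)).map (fun l => s (ι l))).prod

section Aux

variable {K V I : Type*} [Field K] [AddCommGroup V] [Module K V]
    (s : I → Module.End K V) (ι : ℕ → I)

lemma fullProd_zero : fullProd s ι 1 0 = 1 := by
  simp [fullProd]

lemma fullProd_succ (j : ℕ) :
    fullProd s ι 1 (j + 1) = fullProd s ι 1 j * s (ι (j + 1)) := by
  unfold fullProd
  have h1 : j + 1 + 1 - 1 = j + 1 := by omega
  have h2 : j + 1 - 1 = j := by omega
  rw [h1, h2, List.range'_concat]
  simp [add_comm 1 j]

lemma subProd_empty (S : Finset ℕ) (k : ℕ) : subProd s ι S (k + 1) k = 1 := by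
  have : k + 1 - (k + 1) = 0 := by omega
  simp [subProd, this]

lemma subProd_cons (S : Finset ℕ) (j k : ℕ) (h : j ≤ k) :
    subProd s ι S j k = (if j ∈ S then s (ι j) else 1) * subProd s ι S (j + 1) k := by
  unfold subProd
  have h1 : k + 1 - j = (k - j) + 1 := by omega
  have h2 : k + 1 - (j + 1) = k - j := by omega
  rw [h1, h2, List.range'_succ, List.filter_cons]
  by_cases hj : j ∈ S <;> simp [hj]

lemma B_list_inv (B : V →ₗ[K] V →ₗ[K] K)
    (hBinv : ∀ i v w, B (s i v) (s i w) = B v w) (L : List ℕ) (v w : V) :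
    B (((L.map fun l => s (ι l)).prod) v) (((L.map fun l => s (ι l)).prod) w) = B v w := by
  induction L with
  | nil => simp
  | cons a t ih =>
      simp only [List.map_cons, List.prod_cons]
      show B ((s (ι a)) (((t.map fun l => s (ι l)).prod) v))
        ((s (ι a)) (((t.map fun l => s (ι l)).prod) w)) = B v w
      rw [hBinv]; exact ih

lemma B_fullProd_inv (B : V →ₗ[K] V →ₗ[K] K)
    (hBinv : ∀ i v w, B (s i v) (s i w) = B v w) (m : ℕ) (v w : V) :
    B (fullProd s ι 1 m v) (fullProd s ι 1 m w) = B v w :=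
  B_list_inv s ι B hBinv _ v w

end Aux

/-- With a symmetric invariant bilinear form `⟨·,·⟩`, reflections
`s i (v) = v − ⟨α_i∨, v⟩α_i` where `⟨α_i∨, v⟩ = 2⟨α_i, v⟩/⟨α_i, α_i⟩`, an expression
`w = s_{i_1}⋯s_{i_N}`, `S ⊆ [1,N]` and `a_{jk}(λ) := ⟨α_{i_j}∨, u_{[j+1,k]}(λ)⟩`:
if `l ∉ S` then
`∑_{j<l, j∉S} ⟨β_j,β_l⟩ a_{jk}(λ) − ∑_{l<j≤k, j∉S} ⟨β_j,β_l⟩ a_{jk}(λ)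
  = ⟨(w_{≤k} + u_{≤k})λ, β_l⟩`. -/
theorem stmt8 {K V I : Type*} [Field K] [AddCommGroup V] [Module K V]
    (B : V →ₗ[K] V →ₗ[K] K) (hBsymm : ∀ v w, B v w = B w v)
    (α : I → V) (coroot : I → V →ₗ[K] K) (s : I → Module.End K V)
    (hs : ∀ i v, s i v = v - coroot i v • α i)
    (hBinv : ∀ i v w, B (s i v) (s i w) = B v w)
    (hα : ∀ i, B (α i) (α i) ≠ 0)
    (hcoroot : ∀ i v, coroot i v = 2 * B (α i) v / B (α i) (α i))
    (N : ℕ) (ι : ℕ → I) (S : Finset ℕ) (hS : S ⊆ Finset.Icc 1 N)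
    (l k : ℕ) (hl : 1 ≤ l) (hlk : l ≤ k) (hkN : k ≤ N) (hlS : l ∉ S) (lam : V) :
    (∑ j ∈ (Finset.Icc 1 (l - 1)).filter (fun j => j ∉ S),
        B (fullProd s ι 1 (j - 1) (α (ι j))) (fullProd s ι 1 (l - 1) (α (ι l))) *
          coroot (ι j) (subProd s ι S (j + 1) k lam))
      - (∑ j ∈ (Finset.Icc (l + 1) k).filter (fun j => j ∉ S),
          B (fullProd s ι 1 (j - 1) (α (ι j))) (fullProd s ι 1 (l - 1) (α (ι l))) *
            coroot (ι j) (subProd s ι S (j + 1) k lam))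
      = B (fullProd s ι 1 k lam + subProd s ι S 1 k lam)
          (fullProd s ι 1 (l - 1) (α (ι l))) := by
  classical
  set βl : V := fullProd s ι 1 (l - 1) (α (ι l)) with hβl
  set y : ℕ → K := fun m => B (fullProd s ι 1 m (subProd s ι S (m + 1) k lam)) βl with hy
  set c : ℕ → K := fun j =>
    B (fullProd s ι 1 (j - 1) (α (ι j))) βl * coroot (ι j) (subProd s ι S (j + 1) k lam)
    with hc
  -- the basic telescoping step
  have hstep : ∀ j, 1 ≤ j → j ≤ k →
      y (j - 1) = y j + (if j ∈ S then 0 else c j) := by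
    intro j hj1 hjk
    obtain ⟨m, rfl⟩ : ∃ m, j = m + 1 := ⟨j - 1, by omega⟩
    have hm : m + 1 - 1 = m := by omega
    have hcons := subProd_cons s ι S (m + 1) k hjk
    by_cases hjS : m + 1 ∈ S
    · simp only [hjS, if_true] at hcons ⊢
      simp only [hy, hm, hcons, add_zero]
      rw [fullProd_succ]
      rfl
    · simp only [hjS, if_false] at hcons ⊢
      simp only [hy, hc, hm, hcons, one_mul]
      rw [fullProd_succ]
      show B (fullProd s ι 1 m (subProd s ι S (m + 1 + 1) k lam)) βl =
        B (fullProd s ι 1 m ((s (ι (m + 1))) (subProd s ι S (m + 1 + 1) k lam))) βl + _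
      rw [hs]
      rw [map_sub, map_smul, map_sub, LinearMap.sub_apply, map_smul, LinearMap.smul_apply,
        smul_eq_mul]
      ring
  -- telescoping sum
  have htel : ∀ m, m ≤ k →
      y 0 = y m + ∑ j ∈ (Finset.Icc 1 m).filter (fun j => j ∉ S), c j := by
    intro m hm
    induction m with
    | zero => simp
    | succ n ih =>
        have hnk : n ≤ k := by omega
        have hst := hstep (n + 1) (by omega) hm
        simp only [Nat.add_sub_cancel] at hst
        rw [ih hnk, hst]
        have hins : Finset.Icc 1 (n + 1) = insert (n + 1) (Finset.Icc 1 n) := by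
          ext x; simp [Finset.mem_Icc, Finset.mem_insert]; omega
        rw [hins, Finset.filter_insert]
        by_cases hnS : n + 1 ∈ S
        · simp [hnS]
        · rw [if_pos hnS, Finset.sum_insert (by simp [Finset.mem_Icc])]
          simp [hnS]
          ring
  -- split the sum over [1,k] at l
  have hsplit : ∑ j ∈ (Finset.Icc 1 k).filter (fun j => j ∉ S), c j
      = (∑ j ∈ (Finset.Icc 1 l).filter (fun j => j ∉ S), c j)
        + ∑ j ∈ (Finset.Icc (l + 1) k).filter (fun j => j ∉ S), c j := by
    have e1 : Finset.Icc 1 k = Finset.Ioc 0 k := by ext x; simp [Finset.mem_Icc]; omega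
    have e2 : Finset.Icc 1 l = Finset.Ioc 0 l := by ext x; simp [Finset.mem_Icc]; omega
    have e3 : Finset.Icc (l + 1) k = Finset.Ioc l k := by ext x; simp [Finset.mem_Icc]
    rw [e1, e2, e3, Finset.sum_filter, Finset.sum_filter, Finset.sum_filter]
    exact (Finset.sum_Ioc_consecutive _ (by omega) hlk).symm
  -- peel off the term at l
  have hpeel : ∑ j ∈ (Finset.Icc 1 l).filter (fun j => j ∉ S), c j
      = (∑ j ∈ (Finset.Icc 1 (l - 1)).filter (fun j => j ∉ S), c j) + c l := by
    have hins : Finset.Icc 1 l = insert l (Finset.Icc 1 (l - 1)) := by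
      ext x; simp [Finset.mem_Icc, Finset.mem_insert]; omega
    rw [hins, Finset.filter_insert, if_pos hlS,
      Finset.sum_insert (by simp [Finset.mem_Icc]; omega)]
    ring
  -- the key identity at l : c l = -2 * y l
  have hkey : c l = -(2 * y l) := by
    set μ : V := subProd s ι S (l + 1) k lam with hμ
    obtain ⟨m, rfl⟩ : ∃ m, l = m + 1 := ⟨l - 1, by omega⟩
    have hm : m + 1 - 1 = m := by omega
    have hyl : y (m + 1) = B ((s (ι (m + 1))) μ) (α (ι (m + 1))) := by
      simp only [hy, hμ]
      rw [fullProd_succ]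
      show B (fullProd s ι 1 m ((s (ι (m + 1))) μ)) βl = _
      rw [hβl, hm]
      exact B_fullProd_inv s ι B hBinv m _ _
    have hcl : c (m + 1)
        = B (α (ι (m + 1))) (α (ι (m + 1))) * coroot (ι (m + 1)) μ := by
      simp only [hc, hm, hβl, hμ]
      rw [B_fullProd_inv s ι B hBinv m]
    rw [hcl, hyl, hs, hcoroot]
    rw [map_sub, map_smul, LinearMap.sub_apply, LinearMap.smul_apply, smul_eq_mul]
    rw [hBsymm μ (α (ι (m + 1)))]
    have ha := hα (ι (m + 1))
    field_simp
    ring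
  -- put everything together
  have h0l := htel l hlk
  have h0k := htel k le_rfl
  have hyk : y k = B (fullProd s ι 1 k lam) βl := by
    simp only [hy, subProd_empty s ι S k]
    rfl
  have hy0 : y 0 = B (subProd s ι S 1 k lam) βl := by
    simp only [hy, fullProd_zero s ι]
    rfl
  have hRHS : B (fullProd s ι 1 k lam + subProd s ι S 1 k lam) βl = y k + y 0 := by
    rw [map_add, LinearMap.add_apply, hyk, hy0]
  rw [hRHS]
  rw [hsplit, hpeel] at h0k
  rw [hpeel] at h0l
  linear_combination (-2 : K) * h0l + h0k - hkey
end

section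
/- Let W be a Coxeter group, w = s_{i_1}⋯s_{i_N} a reduced expression, u ≤ w in Bruhat order, and D = RP_w(u) the index set of the (unique) right positive subexpression of s_{i_1}⋯s_{i_N} with total product u. Then for every l ∈ {1,…,N}, the set D ∩ [l,N] is the index set of the right positive subexpression of the reduced expression s_{i_l}⋯s_{i_N} of w_{[l,N]} with total product w^D_{[l,N]}. -/
/-- The Bruhat order on a Coxeter group: `u ≤ w` iff `w` can be obtained from `u` by
successively multiplying on the right by reflections, increasing the length at each
step. -/
def bruhatLE {B W : Type*} [Group W] {M : CoxeterMatrix B} (cs : CoxeterSystem M W)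
    (u w : W) : Prop :=
  Relation.ReflTransGen
    (fun x y => cs.length x < cs.length y ∧ ∃ t, cs.IsReflection t ∧ y = x * t) u w

/-- The subword product `w^D_{[j,k]}`: the product of the simple reflections
`s_{ι l}` over the positions `l ∈ [j,k]` belonging to `D`, in increasing order. -/
def subwordProd {B W : Type*} [Group W] {M : CoxeterMatrix B} (cs : CoxeterSystem M W)
    (ι : ℕ → B) (D : Finset ℕ) (j k : ℕ) : W :=
  cs.wordProd (((List.range' j (k + 1 - j)).filter (fun l => l ∈ D)).map ι)

/-- `D` is a right positive subexpression of the word at positions `[a,b]`: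
`w^D_{≤k} ≤ w^D_{≤k} s_{i_{k+1}}` for all `a ≤ k < b`. -/
def RightPositiveOn {B W : Type*} [Group W] {M : CoxeterMatrix B} (cs : CoxeterSystem M W)
    (ι : ℕ → B) (a b : ℕ) (D : Finset ℕ) : Prop :=
  ∀ k, a ≤ k → k < b →
    bruhatLE cs (subwordProd cs ι D a k) (subwordProd cs ι D a k * cs.simple (ι (k + 1)))

/-- `D` is a left positive subexpression of the word at positions `[a,b]`:
`w^D_{≥k} ≤ s_{i_{k−1}} w^D_{≥k}` for all `a < k ≤ b`. -/
def LeftPositiveOn {B W : Type*} [Group W] {M : CoxeterMatrix B} (cs : CoxeterSystem M W)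
    (ι : ℕ → B) (a b : ℕ) (D : Finset ℕ) : Prop :=
  ∀ k, a < k → k ≤ b →
    bruhatLE cs (subwordProd cs ι D k b) (cs.simple (ι (k - 1)) * subwordProd cs ι D k b)


lemma bruhatLE_mul_simple_iff {B W : Type*} [Group W] {M : CoxeterMatrix B}
    (cs : CoxeterSystem M W) (x : W) (i : B) :
    bruhatLE cs x (x * cs.simple i) ↔
      cs.length (x * cs.simple i) = cs.length x + 1 := by
  constructor
  · intro h
    have hgen : ∀ y, bruhatLE cs x y → cs.length x < cs.length y ∨ x = y := by
      intro y hy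
      induction hy with
      | refl => exact Or.inr rfl
      | tail _ hs ih =>
        rcases ih with h1 | h1
        · exact Or.inl (h1.trans hs.1)
        · exact Or.inl (h1 ▸ hs.1)
    have hne : x ≠ x * cs.simple i := by
      intro he
      have h1 : cs.simple i = 1 := left_eq_mul.mp he
      have h2 := cs.length_eq_zero_iff.mpr h1
      have h3 := cs.length_simple i
      omega
    rcases hgen _ h with h1 | h1
    · rcases cs.length_mul_simple x i with h2 | h2 <;> omega
    · exact absurd h1 hne
  · intro h
    exact Relation.ReflTransGen.single
      ⟨by omega, cs.simple i, cs.isReflection_simple i, rfl⟩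

lemma subwordProd_nil {B W : Type*} [Group W] {M : CoxeterMatrix B}
    (cs : CoxeterSystem M W) (ι : ℕ → B) (D : Finset ℕ) {a k : ℕ} (h : k < a) :
    subwordProd cs ι D a k = 1 := by
  unfold subwordProd
  have : k + 1 - a = 0 := by omega
  simp [this, CoxeterSystem.wordProd]

lemma subwordProd_succ {B W : Type*} [Group W] {M : CoxeterMatrix B}
    (cs : CoxeterSystem M W) (ι : ℕ → B) (D : Finset ℕ) {a k : ℕ} (h : a ≤ k + 1) :
    subwordProd cs ι D a (k + 1) =
      subwordProd cs ι D a k * (if k + 1 ∈ D then cs.simple (ι (k + 1)) else 1) := by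
  unfold subwordProd
  have h1 : k + 1 + 1 - a = (k + 1 - a) + 1 := by omega
  have h2 : a + (k + 1 - a) = k + 1 := by omega
  have h2' : a + 1 * (k + 1 - a) = k + 1 := by omega
  rw [h1, List.range'_concat, h2', List.filter_append, List.map_append,
    cs.wordProd_append]
  congr 1
  by_cases hk : k + 1 ∈ D <;> simp [hk, CoxeterSystem.wordProd]

lemma subwordProd_split {B W : Type*} [Group W] {M : CoxeterMatrix B}
    (cs : CoxeterSystem M W) (ι : ℕ → B) (D : Finset ℕ) {a l k : ℕ}
    (h1 : a ≤ l) (h2 : 1 ≤ l) (h3 : l ≤ k + 1) :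
    subwordProd cs ι D a k =
      subwordProd cs ι D a (l - 1) * subwordProd cs ι D l k := by
  unfold subwordProd
  rw [← cs.wordProd_append, ← List.map_append, ← List.filter_append]
  congr 2
  have h4 : l - 1 + 1 - a = l - a := by omega
  rw [h4]
  have := @List.range'_append_1 a (l - a) (k + 1 - l)
  rw [show a + (l - a) = l by omega] at this
  rw [show k + 1 - a = l - a + (k + 1 - l) by omega]
  exact congrArg _ this.symm

lemma subwordProd_inter {B W : Type*} [Group W] {M : CoxeterMatrix B}
    (cs : CoxeterSystem M W) (ι : ℕ → B) (D : Finset ℕ) {l N a k : ℕ}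
    (hla : l ≤ a) (hkN : k ≤ N) :
    subwordProd cs ι (D ∩ Finset.Icc l N) a k = subwordProd cs ι D a k := by
  unfold subwordProd
  congr 1
  apply congrArg
  apply List.filter_congr
  intro x hx
  rw [List.mem_range'_1] at hx
  simp only [Finset.mem_inter, Finset.mem_Icc, decide_eq_decide]
  constructor
  · tauto
  · intro hxD
    exact ⟨hxD, by omega, by omega⟩

/-- If `D` is the index set of a right positive subexpression of the
reduced expression `s_{i_1}⋯s_{i_N}`, then for every `l ∈ [1,N]` the set `D ∩ [l,N]`
is the index set of a right positive subexpression of the suffix reduced expression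
`s_{i_l}⋯s_{i_N}` of `w_{[l,N]}`, with total product `w^D_{[l,N]}`. -/
theorem stmt11 {B W : Type*} [Group W] {M : CoxeterMatrix B} (cs : CoxeterSystem M W)
    (N : ℕ) (ι : ℕ → B) (hred : cs.IsReduced ((List.range' 1 N).map ι))
    (D : Finset ℕ) (hD : D ⊆ Finset.Icc 1 N)
    (hpos : RightPositiveOn cs ι 1 N D) :
    ∀ l, 1 ≤ l → l ≤ N →
      RightPositiveOn cs ι l N (D ∩ Finset.Icc l N)
        ∧ subwordProd cs ι (D ∩ Finset.Icc l N) l N = subwordProd cs ι D l N := by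
  intro l hl1 hlN
  have posu : ∀ k, k < N →
      cs.length (subwordProd cs ι D 1 k * cs.simple (ι (k + 1)))
        = cs.length (subwordProd cs ι D 1 k) + 1 := by
    intro k hk
    rcases Nat.eq_zero_or_pos k with rfl | hk1
    · rw [subwordProd_nil cs ι D (show (0:ℕ) < 1 by omega), one_mul,
        cs.length_simple, cs.length_eq_zero_iff.mpr rfl]
    · exact (bruhatLE_mul_simple_iff cs _ _).mp (hpos k hk1 hk)
  have step : ∀ k, k < N → l ≤ k + 1 →
      cs.length (subwordProd cs ι D 1 k)
        = cs.length (subwordProd cs ι D 1 (l - 1)) + cs.length (subwordProd cs ι D l k) →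
      cs.length (subwordProd cs ι D l k * cs.simple (ι (k + 1)))
        = cs.length (subwordProd cs ι D l k) + 1 := by
    intro k hk2 hlk ihk
    have hu := posu k hk2
    rcases cs.length_mul_simple (subwordProd cs ι D l k) (ι (k + 1)) with h | h
    · exact h
    · exfalso
      have hsplit := subwordProd_split cs ι D (show (1:ℕ) ≤ l from hl1) hl1 hlk
      have heq : subwordProd cs ι D 1 k * cs.simple (ι (k + 1))
          = subwordProd cs ι D 1 (l - 1)
            * (subwordProd cs ι D l k * cs.simple (ι (k + 1))) := by
        rw [hsplit, mul_assoc]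
      have hle := cs.length_mul_le (subwordProd cs ι D 1 (l - 1))
        (subwordProd cs ι D l k * cs.simple (ι (k + 1)))
      rw [← heq] at hle
      omega
  have key : ∀ k, l - 1 ≤ k → k ≤ N →
      cs.length (subwordProd cs ι D 1 k)
        = cs.length (subwordProd cs ι D 1 (l - 1)) + cs.length (subwordProd cs ι D l k) := by
    intro k
    induction k with
    | zero =>
      intro h1 _
      rw [subwordProd_nil cs ι D (show (0:ℕ) < l by omega),
        cs.length_eq_zero_iff.mpr rfl, show l - 1 = 0 by omega]
      omega
    | succ k ih =>
      intro h1 h2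
      by_cases hcase : l - 1 = k + 1
      · rw [subwordProd_nil cs ι D (show k + 1 < l by omega),
          cs.length_eq_zero_iff.mpr rfl, hcase]
        omega
      · have hlk : l ≤ k + 1 := by omega
        have ihk := ih (by omega) (by omega)
        rw [subwordProd_succ cs ι D (show (1:ℕ) ≤ k + 1 by omega),
          subwordProd_succ cs ι D hlk]
        by_cases hD1 : k + 1 ∈ D
        · simp only [if_pos hD1]
          rw [posu k (by omega), step k (by omega) hlk ihk]
          omega
        · simp only [if_neg hD1, mul_one]
          exact ihk
  refine ⟨?_, subwordProd_inter cs ι D le_rfl le_rfl⟩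
  intro k hk1 hk2
  rw [subwordProd_inter cs ι D le_rfl hk2.le, bruhatLE_mul_simple_iff]
  exact step k hk2 (by omega) (key k (by omega) (by omega))
end

section
/- Let W be a Coxeter group and w = s_{i_1}⋯s_{i_N} a reduced expression. For every u ∈ W with u ≤ w in the Bruhat order, there exists a subexpression of s_{i_1}⋯s_{i_N} with total product u that is right positive, i.e., its index set D satisfies w^D_{≤k} ≤ w^D_{≤k} s_{i_{k+1}} for all k ∈ {1,…,N−1}, where w^D_{≤k} is the product of s_{i_j} over j ∈ D ∩ [1,k] in increasing order. -/
namespace StrongExch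

open List CoxeterSystem

variable {B W : Type*} [Group W] {M : CoxeterMatrix B} (cs : CoxeterSystem M W)

local prefix:100 "s" => cs.simple
local prefix:100 "π" => cs.wordProd
local prefix:100 "ℓ" => cs.length
local prefix:100 "ris" => cs.rightInvSeq
local prefix:100 "lis" => cs.leftInvSeq

open Classical in
/-- parity count of `t` in a list -/
noncomputable def nu (l : List W) (t : W) : ZMod 2 :=
  (l.map fun x => if x = t then (1 : ZMod 2) else 0).sum

variable {cs}

theorem nu_nil (t : W) : nu ([] : List W) t = 0 := rfl

open Classical in
theorem nu_cons (x : W) (l : List W) (t : W) :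
    nu (x :: l) t = (if x = t then (1 : ZMod 2) else 0) + nu l t := by
  simp [nu]

theorem nu_append (l₁ l₂ : List W) (t : W) :
    nu (l₁ ++ l₂) t = nu l₁ t + nu l₂ t := by
  simp [nu]

theorem nu_reverse (l : List W) (t : W) : nu l.reverse t = nu l t := by
  simp [nu, List.sum_reverse]

open Classical in
theorem nu_map_conj (l : List W) (g t : W) :
    nu (l.map fun x => g * x * g⁻¹) t = nu l (g⁻¹ * t * g) := by
  induction l with
  | nil => rfl
  | cons x l ih =>
      rw [List.map_cons, nu_cons, nu_cons, ih]
      congr 1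
      refine if_congr ?_ rfl rfl
      constructor
      · rintro rfl; group
      · rintro rfl; group

theorem nu_eq_zero_of_not_mem {l : List W} {t : W} (h : t ∉ l) : nu l t = 0 := by
  induction l with
  | nil => rfl
  | cons x l ih =>
      rw [List.mem_cons, not_or] at h
      rw [nu_cons, if_neg (fun hx => h.1 hx.symm), ih h.2, add_zero]

theorem mem_of_nu_ne_zero {l : List W} {t : W} (h : nu l t ≠ 0) : t ∈ l := by
  by_contra hmem
  exact h (nu_eq_zero_of_not_mem hmem)

theorem nu_map_congr {α : Type*} (l : List α) {f g : α → W} (h : ∀ x ∈ l, f x = g x) (t : W) :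
    nu (l.map f) t = nu (l.map g) t := by
  rw [List.map_congr_left h]

variable (cs)

open Classical in
/-- The building block of the reflection representation on `W × ZMod 2`. -/
noncomputable def eFun (i : B) : W × ZMod 2 → W × ZMod 2 :=
  fun p => (s i * p.1 * s i, p.2 + if p.1 = s i then 1 else 0)

theorem eFun_eFun (i : B) (p : W × ZMod 2) : eFun cs i (eFun cs i p) = p := by
  obtain ⟨t, z⟩ := p
  simp only [eFun]
  have h1 : s i * (s i * t * s i) * s i = t := by
    simp only [← mul_assoc, cs.simple_mul_simple_self, one_mul]
    rw [mul_assoc, cs.simple_mul_simple_self, mul_one]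
  refine Prod.ext h1 ?_
  by_cases h : t = s i
  · subst h
    simp only [cs.simple_mul_simple_self, one_mul, if_pos rfl]
    show z + 1 + 1 = z
    have : (1 : ZMod 2) + 1 = 0 := by decide
    rw [add_assoc, this, add_zero]
  · have h2 : s i * t * s i ≠ s i := by
      intro hc
      apply h
      have := congrArg (fun x => s i * x * s i) hc
      simpa only [h1, cs.simple_mul_simple_self, one_mul] using this
    simp only [if_neg h, if_neg h2, add_zero]
    simp [h2]

/-- The permutation of `W × ZMod 2` attached to a simple reflection. -/
noncomputable def ePerm (i : B) : Equiv.Perm (W × ZMod 2) :=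
  ⟨eFun cs i, eFun cs i, fun p => eFun_eFun cs i p, fun p => eFun_eFun cs i p⟩

open Classical in
theorem prod_map_ePerm (ω : List B) (t : W) (z : ZMod 2) :
    ((ω.map (ePerm cs)).prod) (t, z) = (π ω * t * (π ω)⁻¹, z + nu (ris ω) t) := by
  induction ω with
  | nil => simp [nu_nil, wordProd_nil]
  | cons i ω ih =>
      rw [List.map_cons, List.prod_cons, Equiv.Perm.mul_apply, ih]
      show eFun cs i _ = _
      rw [eFun]
      refine Prod.ext ?_ ?_
      · show s i * (π ω * t * (π ω)⁻¹) * s i = π (i :: ω) * t * (π (i :: ω))⁻¹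
        rw [cs.wordProd_cons, mul_inv_rev, cs.inv_simple]
        group
      · show z + nu (ris ω) t + (if π ω * t * (π ω)⁻¹ = s i then 1 else 0)
          = z + nu (ris (i :: ω)) t
        have hris : ris (i :: ω) = ((π ω)⁻¹ * s i * π ω) :: ris ω := rfl
        rw [hris, nu_cons]
        have hiff : (π ω * t * (π ω)⁻¹ = s i) ↔ ((π ω)⁻¹ * s i * π ω = t) := by
          constructor
          · rintro h; rw [← h]; group
          · rintro rfl; group
        rw [if_congr hiff rfl rfl]
        ring


/-- The word `[i, i', i, i', ...]` of length `2m`. -/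
def pairRep (i i' : B) : ℕ → List B
  | 0 => []
  | m + 1 => i :: i' :: pairRep i i' m

theorem wordProd_pairRep (i i' : B) (m : ℕ) :
    π (pairRep i i' m) = (s i * s i') ^ m := by
  induction m with
  | zero => simp [pairRep]
  | succ m ih => rw [pairRep, cs.wordProd_cons, cs.wordProd_cons, ih, pow_succ', mul_assoc]

theorem prod_map_pairRep_ePerm (i i' : B) (m : ℕ) :
    (((pairRep i i' m).map (ePerm cs)).prod) = (ePerm cs i * ePerm cs i') ^ m := by
  induction m with
  | zero => simp [pairRep]
  | succ m ih =>
      rw [pairRep, List.map_cons, List.map_cons, List.prod_cons, List.prod_cons, ih,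
        pow_succ', mul_assoc]

theorem ris_pairRep (i i' : B) (m : ℕ) :
    ris (pairRep i i' m) =
      (List.range (2 * m)).map
        (fun (k : ℕ) => (s i * s i') ^ ((k : ℤ) + 1 - 2 * (m : ℤ)) * s i') := by
  set a : W := s i * s i' with ha
  set E : ℤ → W := fun p => a ^ p * s i' with hE
  have hainv : a⁻¹ = s i' * s i := by
    rw [ha, mul_inv_rev, cs.inv_simple, cs.inv_simple]
  have key : ∀ n : ℤ, s i' * a ^ n = a ^ (-n) * s i' := by
    intro n
    have h1 : (MulAut.conj (s i')) a = a⁻¹ := by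
      rw [MulAut.conj_apply, cs.inv_simple, hainv, ha]
      simp [mul_assoc, cs.simple_mul_simple_self]
    have h2 := map_zpow (MulAut.conj (s i')) a n
    rw [h1, inv_zpow, ← zpow_neg] at h2
    rw [MulAut.conj_apply, cs.inv_simple] at h2
    calc s i' * a ^ n = s i' * a ^ n * s i' * s i' := by
          rw [mul_assoc (s i' * a ^ n), cs.simple_mul_simple_self, mul_one]
      _ = a ^ (-n) * s i' := by rw [h2]
  have E_inv : ∀ p : ℤ, (E p)⁻¹ = E p := by
    intro p
    show (a ^ p * s i')⁻¹ = a ^ p * s i'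
    rw [mul_inv_rev, cs.inv_simple, ← zpow_neg, key, neg_neg]
  have E_mul_zpow : ∀ p q : ℤ, E p * a ^ q = E (p - q) := by
    intro p q
    show a ^ p * s i' * a ^ q = a ^ (p - q) * s i'
    rw [mul_assoc, key, ← mul_assoc, ← zpow_add, ← sub_eq_add_neg]
  have zpow_mul_E : ∀ q p : ℤ, a ^ q * E p = E (q + p) := by
    intro q p
    show a ^ q * (a ^ p * s i') = a ^ (q + p) * s i'
    rw [← mul_assoc, ← zpow_add]
  have E_mul_E : ∀ p q : ℤ, E p * E q = a ^ (p - q) := by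
    intro p q
    show a ^ p * s i' * (a ^ q * s i') = a ^ (p - q)
    rw [← mul_assoc, mul_assoc (a ^ p), key, ← mul_assoc, ← zpow_add, ← sub_eq_add_neg,
      mul_assoc, cs.simple_mul_simple_self, mul_one]
  have hsimple : s i = E 1 := by
    show s i = a ^ (1 : ℤ) * s i'
    rw [zpow_one, ha, mul_assoc, cs.simple_mul_simple_self, mul_one]
  have hsimple' : s i' = E 0 := by
    show s i' = a ^ (0 : ℤ) * s i'
    rw [zpow_zero, one_mul]
  induction m with
  | zero => simp [pairRep]
  | succ m ih =>
      have hπm : π (pairRep i i' m) = a ^ ((m : ℤ)) := by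
        rw [wordProd_pairRep, ha, zpow_natCast]
      have hris : ris (pairRep i i' (m + 1)) =
          ((π (i' :: pairRep i i' m))⁻¹ * s i * π (i' :: pairRep i i' m)) ::
          ((π (pairRep i i' m))⁻¹ * s i' * π (pairRep i i' m)) :: ris (pairRep i i' m) := rfl
      have helt0 : (π (i' :: pairRep i i' m))⁻¹ * s i * π (i' :: pairRep i i' m)
          = E (-(2 * (m : ℤ) + 1)) := by
        rw [cs.wordProd_cons, hπm, hsimple', hsimple, E_mul_zpow, zero_sub, E_inv, E_mul_E,
          zpow_mul_E]
        congr 1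
        ring
      have helt1 : (π (pairRep i i' m))⁻¹ * s i' * π (pairRep i i' m)
          = E (-(2 * (m : ℤ))) := by
        rw [hπm, hsimple', ← zpow_neg, mul_assoc, E_mul_zpow, zpow_mul_E]
        congr 1
        ring
      rw [hris, helt0, helt1, ih]
      rw [show 2 * (m + 1) = 2 + 2 * m by ring, List.range_add]
      rw [show List.range 2 = [0, 1] from rfl]
      rw [List.map_append, List.map_map]
      simp only [List.map_cons, List.map_nil, List.cons_append, List.nil_append]
      simp only [hE]
      rw [show ((0 : ℕ) : ℤ) + 1 - 2 * ((m + 1 : ℕ) : ℤ) = -(2 * (m : ℤ) + 1) by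
        push_cast; ring]
      rw [show ((1 : ℕ) : ℤ) + 1 - 2 * ((m + 1 : ℕ) : ℤ) = -(2 * (m : ℤ)) by
        push_cast; ring]
      have htail : ((List.range (2 * m)).map
          ((fun (k : ℕ) => a ^ ((k : ℤ) + 1 - 2 * ((m + 1 : ℕ) : ℤ)) * s i')
            ∘ (fun x => 2 + x)))
          = (List.range (2 * m)).map
            (fun (k : ℕ) => a ^ ((k : ℤ) + 1 - 2 * ((m : ℕ) : ℤ)) * s i') := by
        apply List.map_congr_left
        intro k hk
        simp only [Function.comp_apply]
        rw [show ((2 + k : ℕ) : ℤ) + 1 - 2 * ((m + 1 : ℕ) : ℤ)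
            = ((k : ℤ)) + 1 - 2 * ((m : ℕ) : ℤ) by push_cast; ring]
      rw [htail]

theorem liftable : M.IsLiftable (fun i => ePerm cs i) := by
  intro i i'
  show (ePerm cs i * ePerm cs i') ^ M i i' = 1
  rw [← prod_map_pairRep_ePerm]
  apply Equiv.ext
  rintro ⟨t, z⟩
  rw [prod_map_ePerm]
  have hπ : π (pairRep i i' (M i i')) = 1 := by
    rw [wordProd_pairRep]; exact cs.simple_mul_simple_pow i i'
  have hnu : nu (ris (pairRep i i' (M i i'))) t = 0 := by
    rw [ris_pairRep]
    set m := M.M i i' with hm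
    have ham : ((s i * s i' : W)) ^ ((m : ℤ)) = 1 := by
      rw [zpow_natCast]; exact cs.simple_mul_simple_pow i i'
    rw [show 2 * m = m + m by ring, List.range_add, List.map_append, nu_append, List.map_map]
    have hcong : nu ((List.range m).map
          ((fun (k : ℕ) => (s i * s i') ^ ((k : ℤ) + 1 - 2 * (m : ℤ)) * s i')
            ∘ (fun x => m + x))) t
        = nu ((List.range m).map
          (fun (k : ℕ) => ((s i * s i' : W)) ^ ((k : ℤ) + 1 - 2 * (m : ℤ)) * s i')) t := by
      apply nu_map_congr
      intro k hk
      simp only [Function.comp_apply]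
      congr 1
      rw [show ((m + k : ℕ) : ℤ) + 1 - 2 * (m : ℤ)
          = ((m : ℤ)) + ((k : ℤ) + 1 - 2 * (m : ℤ)) by push_cast; ring]
      rw [zpow_add, ham, one_mul]
    rw [hcong, CharTwo.add_self_eq_zero]
  rw [hπ, hnu, add_zero]
  simp

/-- The representation of `W` on `W × ZMod 2`. -/
noncomputable def rp : W →* Equiv.Perm (W × ZMod 2) :=
  cs.lift ⟨fun i => ePerm cs i, liftable cs⟩

theorem rp_wordProd (ω : List B) : rp cs (π ω) = (ω.map (ePerm cs)).prod := by
  induction ω with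
  | nil => rw [cs.wordProd_nil, map_one, List.map_nil, List.prod_nil]
  | cons i ω ih =>
      rw [cs.wordProd_cons, map_mul, ih, List.map_cons, List.prod_cons]
      congr 1
      exact cs.lift_apply_simple (liftable cs) i

theorem nu_ris_eq {ω₁ ω₂ : List B} (h : π ω₁ = π ω₂) (t : W) :
    nu (ris ω₁) t = nu (ris ω₂) t := by
  have e1 : (rp cs (π ω₁) (t, 0)).2 = nu (ris ω₁) t := by
    rw [rp_wordProd, prod_map_ePerm]; simp
  have e2 : (rp cs (π ω₂) (t, 0)).2 = nu (ris ω₂) t := by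
    rw [rp_wordProd, prod_map_ePerm]; simp
  rw [← e1, ← e2, h]


theorem ris_append (α β : List B) :
    ris (α ++ β) = (ris α).map (fun x => (π β)⁻¹ * x * π β) ++ ris β := by
  induction α with
  | nil => simp
  | cons i α ih =>
      show ((π (α ++ β))⁻¹ * s i * π (α ++ β)) :: ris (α ++ β) = _
      rw [ih]
      show _ = ((π β)⁻¹ * ((π α)⁻¹ * s i * π α) * π β) :: ((ris α).map _ ++ ris β)
      rw [cs.wordProd_append, mul_inv_rev]
      congr 1
      group

theorem lis_eq_conj_ris (ω : List B) :
    lis ω = (ris ω).map (fun x => (π ω) * x * (π ω)⁻¹) := by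
  induction ω with
  | nil => simp
  | cons i ω ih =>
      show s i :: (lis ω).map (fun x => s i * x * (s i)⁻¹) = _
      rw [ih]
      show _ = ((π (i :: ω)) * ((π ω)⁻¹ * s i * π ω) * (π (i :: ω))⁻¹)
          :: ((ris ω).map fun x => (π (i :: ω)) * x * (π (i :: ω))⁻¹)
      congr 1
      · simp only [cs.wordProd_cons]
        simp only [mul_inv_rev, cs.inv_simple, inv_inv, mul_assoc, inv_mul_cancel_left,
          mul_inv_cancel_left, inv_mul_cancel, mul_inv_cancel, cs.simple_mul_simple_cancel_left,
          cs.simple_mul_simple_cancel_right, cs.simple_mul_simple_self, mul_one, one_mul]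
      · rw [List.map_map]
        apply List.map_congr_left
        intro x hx
        simp only [Function.comp_apply, cs.wordProd_cons]
        simp only [mul_inv_rev, cs.inv_simple, inv_inv, mul_assoc, inv_mul_cancel_left,
          mul_inv_cancel_left, inv_mul_cancel, mul_inv_cancel, cs.simple_mul_simple_cancel_left,
          cs.simple_mul_simple_cancel_right, cs.simple_mul_simple_self, mul_one, one_mul]

/-- **Strong exchange**, membership form. -/
theorem mem_rightInvSeq (ω : List B) {t : W} (ht : cs.IsReflection t)
    (hlt : ℓ (π ω * t) < ℓ (π ω)) : t ∈ ris ω := by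
  have htinv : t⁻¹ = t := ht.inv
  have htsq : t * t = 1 := ht.mul_self
  obtain ⟨v, j, rfl⟩ := ht
  set t := v * s j * v⁻¹ with htdef
  obtain ⟨χ, hχ⟩ := cs.wordProd_surjective v
  obtain ⟨ω', hω'red, hω'⟩ := cs.exists_reduced_word' (π ω * t)
  set ρ : List B := χ ++ j :: χ.reverse with hρdef
  have hρ : π ρ = t := by
    rw [hρdef, cs.wordProd_append, cs.wordProd_cons, cs.wordProd_reverse, hχ, htdef, mul_assoc]
  have hword : π ω = π (ω' ++ ρ) := by
    rw [cs.wordProd_append, hρ, ← hω', mul_assoc, htsq, mul_one]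
  have key := nu_ris_eq cs hword t
  -- compute the ρ part
  have hrisρ : ris ρ = (ris χ).map (fun x => (π (j :: χ.reverse))⁻¹ * x * π (j :: χ.reverse))
      ++ (((π χ.reverse)⁻¹ * s j * π χ.reverse) :: ris χ.reverse) := by
    rw [hρdef, ris_append]
    rfl
  have hhead : (π χ.reverse)⁻¹ * s j * π χ.reverse = t := by
    rw [cs.wordProd_reverse, hχ, inv_inv, htdef]
  have hδ : π (j :: χ.reverse) = s j * v⁻¹ := by
    rw [cs.wordProd_cons, cs.wordProd_reverse, hχ]
  have hnuρ : nu (ris ρ) t = 1 := by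
    rw [hrisρ, hhead, nu_append, nu_cons, if_pos rfl]
    have h1 : nu ((ris χ).map fun x => (π (j :: χ.reverse))⁻¹ * x * π (j :: χ.reverse)) t
        = nu (ris χ) (s j) := by
      rw [hδ]
      have : (fun x => (s j * v⁻¹)⁻¹ * x * (s j * v⁻¹))
          = (fun x => (s j * v⁻¹)⁻¹ * x * ((s j * v⁻¹)⁻¹)⁻¹) := by
        funext x; rw [inv_inv]
      rw [this, nu_map_conj, inv_inv]
      congr 1
      simp only [htdef]
      simp only [mul_inv_rev, cs.inv_simple, inv_inv, mul_assoc, inv_mul_cancel_left,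
          mul_inv_cancel_left, inv_mul_cancel, mul_inv_cancel, cs.simple_mul_simple_cancel_left,
          cs.simple_mul_simple_cancel_right, cs.simple_mul_simple_self, mul_one, one_mul]
    have h2 : nu (ris χ.reverse) t = nu (ris χ) (s j) := by
      rw [cs.rightInvSeq_reverse, nu_reverse, lis_eq_conj_ris, hχ, nu_map_conj]
      congr 1
      simp only [htdef]
      simp only [mul_inv_rev, cs.inv_simple, inv_inv, mul_assoc, inv_mul_cancel_left,
          mul_inv_cancel_left, inv_mul_cancel, mul_inv_cancel, cs.simple_mul_simple_cancel_left,
          cs.simple_mul_simple_cancel_right, cs.simple_mul_simple_self, mul_one, one_mul]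
    rw [h1, h2]
    rw [show nu (ris χ) (s j) + (1 + nu (ris χ) (s j))
        = (nu (ris χ) (s j) + nu (ris χ) (s j)) + 1 by ring]
    rw [CharTwo.add_self_eq_zero, zero_add]
  have hnuω' : nu (ris ω') t = 0 := by
    apply nu_eq_zero_of_not_mem
    intro hmem
    have h3 := (cs.isRightInversion_of_mem_rightInvSeq hω'red hmem).2
    rw [← hω', mul_assoc, htsq, mul_one] at h3
    exact absurd hlt (by omega)
  have : nu (ris ω) t = 1 := by
    rw [key, ris_append, nu_append, hnuρ]
    have h4 : nu ((ris ω').map fun x => (π ρ)⁻¹ * x * π ρ) t = nu (ris ω') t := by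
      rw [hρ]
      have : (fun x => t⁻¹ * x * t) = (fun x => t⁻¹ * x * (t⁻¹)⁻¹) := by
        funext x; rw [inv_inv]
      rw [this, nu_map_conj, inv_inv]
      congr 1
      simp only [htdef]
      simp only [mul_inv_rev, cs.inv_simple, inv_inv, mul_assoc, inv_mul_cancel_left,
          mul_inv_cancel_left, inv_mul_cancel, mul_inv_cancel, cs.simple_mul_simple_cancel_left,
          cs.simple_mul_simple_cancel_right, cs.simple_mul_simple_self, mul_one, one_mul]
    rw [h4, hnuω', zero_add]
  apply mem_of_nu_ne_zero
  rw [this]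
  exact one_ne_zero

/-- **Strong exchange**, deletion form. -/
theorem strong_exchange (ω : List B) {t : W} (ht : cs.IsReflection t)
    (hlt : ℓ (π ω * t) < ℓ (π ω)) :
    ∃ k, k < ω.length ∧ π ω * t = π (ω.eraseIdx k) := by
  have hmem := mem_rightInvSeq cs ω ht hlt
  obtain ⟨k, hk, hget⟩ := List.mem_iff_getElem.mp hmem
  refine ⟨k, by simpa using hk, ?_⟩
  rw [← hget, ← List.getD_eq_getElem _ 1 hk]
  exact cs.wordProd_mul_getD_rightInvSeq ω k

theorem isReduced_nil : cs.IsReduced ([] : List B) := by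
  simp [CoxeterSystem.IsReduced]

/-- Deletion property: every word has a reduced sublist with the same product. -/
theorem exists_reduced_sublist (σ : List B) :
    ∃ σ', σ'.Sublist σ ∧ cs.IsReduced σ' ∧ π σ' = π σ := by
  suffices h : ∀ n (σ : List B), σ.length ≤ n →
      ∃ σ', σ'.Sublist σ ∧ cs.IsReduced σ' ∧ π σ' = π σ from h σ.length σ le_rfl
  intro n
  induction n with
  | zero =>
      intro σ hσ
      rw [Nat.le_zero, List.length_eq_zero_iff] at hσ
      exact ⟨[], by simp [hσ], isReduced_nil cs, by rw [hσ]⟩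
  | succ n ih =>
      intro σ hσ
      by_cases hred : cs.IsReduced σ
      · exact ⟨σ, List.Sublist.refl σ, hred, rfl⟩
      rcases List.eq_nil_or_concat σ with rfl | ⟨σ₀, j, rfl⟩
      · exact absurd (isReduced_nil cs) hred
      rw [List.concat_eq_append] at *
      have hlen₀ : σ₀.length ≤ n := by
        have := hσ; simp only [List.length_append, List.length_singleton] at this; omega
      by_cases h₀ : cs.IsReduced σ₀
      · rcases cs.length_mul_simple (π σ₀) j with hup | hdown
        · exfalso
          apply hred
          rw [CoxeterSystem.IsReduced, cs.wordProd_append, cs.wordProd_singleton, hup, h₀]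
          simp
        · have hlt : ℓ (π σ₀ * s j) < ℓ (π σ₀) := by omega
          obtain ⟨k, hk, herase⟩ := strong_exchange cs σ₀ (cs.isReflection_simple j) hlt
          have hlen₁ : (σ₀.eraseIdx k).length ≤ n := by
            rw [List.length_eraseIdx]
            split <;> omega
          obtain ⟨σ', hsub, hσ'red, hσ'prod⟩ := ih (σ₀.eraseIdx k) hlen₁
          refine ⟨σ', ?_, hσ'red, ?_⟩
          · exact (hsub.trans (List.eraseIdx_sublist σ₀ k)).trans
              (List.sublist_append_left σ₀ [j])
          · rw [hσ'prod, ← herase, cs.wordProd_append, cs.wordProd_singleton]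
      · obtain ⟨σ₀', hsub₀, hred₀, hprod₀⟩ := ih σ₀ hlen₀
        have hlen₀' : σ₀'.length < σ₀.length := by
          rcases lt_or_eq_of_le hsub₀.length_le with h | h
          · exact h
          · exfalso
            apply h₀
            rw [CoxeterSystem.IsReduced, ← hprod₀, hred₀, h]
        have hlen₁ : (σ₀' ++ [j]).length ≤ n := by
          simp only [List.length_append, List.length_singleton]; omega
        obtain ⟨σ', hsub, hσ'red, hσ'prod⟩ := ih (σ₀' ++ [j]) hlen₁
        refine ⟨σ', hsub.trans (hsub₀.append (List.Sublist.refl [j])), hσ'red, ?_⟩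
        rw [hσ'prod, cs.wordProd_append, cs.wordProd_append, hprod₀]

/-- The subword property of the Bruhat order. -/
theorem subword_of_bruhatLE {u w : W}
    (h : Relation.ReflTransGen
      (fun x y => ℓ x < ℓ y ∧ ∃ t, cs.IsReflection t ∧ y = x * t) u w)
    (ω : List B) (hω : π ω = w) :
    ∃ σ, σ.Sublist ω ∧ cs.IsReduced σ ∧ π σ = u := by
  induction h using Relation.ReflTransGen.head_induction_on with
  | refl =>
      obtain ⟨σ, h1, h2, h3⟩ := exists_reduced_sublist cs ω
      exact ⟨σ, h1, h2, h3.trans hω⟩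
  | head h' _ ih =>
      obtain ⟨hlen, t, ht, hc⟩ := h'
      obtain ⟨σc, hsubc, hredc, hprodc⟩ := ih
      rename_i x c _
      have hx : x = c * t := by
        rw [hc, mul_assoc, ht.mul_self, mul_one]
      have hlt : ℓ (π σc * t) < ℓ (π σc) := by
        rw [hprodc, ← hx]
        exact hc ▸ hlen
      obtain ⟨k, hk, herase⟩ := strong_exchange cs σc ht hlt
      obtain ⟨σ, h1, h2, h3⟩ := exists_reduced_sublist cs (σc.eraseIdx k)
      refine ⟨σ, (h1.trans (List.eraseIdx_sublist σc k)).trans hsubc, h2, ?_⟩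
      rw [h3, ← herase, hprodc, ← hx]


variable (ι : ℕ → B)

theorem subwordProd_def (D : Finset ℕ) (k : ℕ) :
    subwordProd cs ι D 1 k = π (((List.range' 1 k).filter (fun l => l ∈ D)).map ι) := by
  rw [subwordProd, show k + 1 - 1 = k from by omega]

theorem subwordProd_congr {D D' : Finset ℕ} {k : ℕ}
    (h : ∀ l, 1 ≤ l → l ≤ k → (l ∈ D ↔ l ∈ D')) :
    subwordProd cs ι D 1 k = subwordProd cs ι D' 1 k := by
  rw [subwordProd_def, subwordProd_def]
  congr 2
  apply List.filter_congr
  intro x hx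
  rw [List.mem_range'_1] at hx
  simp only [decide_eq_decide]
  exact h x hx.1 (by omega)

theorem subwordProd_succ (D : Finset ℕ) (N : ℕ) :
    subwordProd cs ι D 1 (N + 1)
      = subwordProd cs ι D 1 N * (if N + 1 ∈ D then s (ι (N + 1)) else 1) := by
  rw [subwordProd_def, subwordProd_def, List.range'_concat,
    show 1 + 1 * N = N + 1 from by omega, List.filter_append, List.map_append,
    cs.wordProd_append]
  congr 1
  rw [List.filter_singleton]
  by_cases h : N + 1 ∈ D
  · simp [h, cs.wordProd_singleton]
  · simp [h]

theorem sublist_singleton' {α : Type*} {l : List α} {a : α} (h : l.Sublist [a]) :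
    l = [] ∨ l = [a] := by
  cases l with
  | nil => exact Or.inl rfl
  | cons b l' =>
      right
      have hb : b = a := by
        have := h.subset (List.mem_cons_self (a := b) (l := l'))
        simpa using this
      subst hb
      have : l'.Sublist [] := (List.cons_sublist_cons.mp h)
      rw [List.sublist_nil.mp this]

theorem main_induction : ∀ N u,
    (∃ σ, σ.Sublist ((List.range' 1 N).map ι) ∧ cs.IsReduced σ ∧ π σ = u) →
    ∃ D : Finset ℕ, D ⊆ Finset.Icc 1 N ∧ RightPositiveOn cs ι 1 N D
      ∧ subwordProd cs ι D 1 N = u := by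
  intro N
  induction N with
  | zero =>
      rintro u ⟨σ, hsub, _, hprod⟩
      have hσ : σ = [] := List.sublist_nil.mp (by simpa using hsub)
      refine ⟨∅, by simp, ?_, ?_⟩
      · intro k hk hk'; omega
      · rw [subwordProd_def]
        rw [show (List.range' 1 0) = [] from rfl]
        rw [← hprod, hσ]
        rfl
  | succ N ih =>
      rintro u ⟨σ, hsub, hred, hprod⟩
      have hrange : (List.range' 1 (N + 1)).map ι
          = (List.range' 1 N).map ι ++ [ι (N + 1)] := by
        rw [List.range'_concat, show 1 + 1 * N = N + 1 from by omega, List.map_append,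
          List.map_singleton]
      rw [hrange] at hsub
      obtain ⟨σ₁, σ₂, rfl, hs1, hs2⟩ := List.sublist_append_iff.mp hsub
      have hIcc : Finset.Icc 1 N ⊆ Finset.Icc 1 (N + 1) := by
        intro x hx; simp only [Finset.mem_Icc] at *; omega
      rcases cs.length_mul_simple u (ι (N + 1)) with hup | hdown
      · -- `u` goes up when multiplied by the last letter
        have hσ₂ : σ₂ = [] := by
          rcases sublist_singleton' hs2 with h | h
          · exact h
          · exfalso
            subst h
            have hred₁ : cs.IsReduced σ₁ := by
              have := hred.take σ₁.length
              rwa [List.take_left] at this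
            have hu1 : u = π σ₁ * s (ι (N + 1)) := by
              rw [← hprod, cs.wordProd_append, cs.wordProd_singleton]
            have husn : u * s (ι (N + 1)) = π σ₁ := by
              rw [hu1, cs.simple_mul_simple_cancel_right]
            have h1 : ℓ (π σ₁) ≤ σ₁.length := cs.length_wordProd_le σ₁
            have h2 : ℓ u = σ₁.length + 1 := by
              rw [← hprod]
              rw [CoxeterSystem.IsReduced] at hred
              simpa using hred
            rw [husn] at hup
            omega
        subst hσ₂
        rw [List.append_nil] at hprod hred
        obtain ⟨D, hD, hpos, hsp⟩ := ih u ⟨σ₁, hs1, hred, hprod⟩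
        have hnotin : N + 1 ∉ D := by
          intro h
          have := hD h
          simp only [Finset.mem_Icc] at this
          omega
        refine ⟨D, hD.trans hIcc, ?_, ?_⟩
        · intro k hk1 hk2
          rcases Nat.lt_or_ge k N with hkN | hkN
          · exact hpos k hk1 hkN
          · have hkN' : k = N := by omega
            rw [hkN', hsp]
            exact Relation.ReflTransGen.single
              ⟨by omega, s (ι (N + 1)), cs.isReflection_simple _, rfl⟩
        · rw [subwordProd_succ, if_neg hnotin, mul_one, hsp]
      · -- `u` goes down when multiplied by the last letter
        have hv : ∃ σ', σ'.Sublist ((List.range' 1 N).map ι) ∧ cs.IsReduced σ'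
            ∧ π σ' = u * s (ι (N + 1)) := by
          rcases sublist_singleton' hs2 with h | h
          · subst h
            rw [List.append_nil] at hprod hred
            have hlt : ℓ (π σ₁ * s (ι (N + 1))) < ℓ (π σ₁) := by
              rw [hprod]; omega
            obtain ⟨k, hk, herase⟩ :=
              strong_exchange cs σ₁ (cs.isReflection_simple (ι (N + 1))) hlt
            obtain ⟨σ', h1, h2, h3⟩ := exists_reduced_sublist cs (σ₁.eraseIdx k)
            exact ⟨σ', (h1.trans (List.eraseIdx_sublist σ₁ k)).trans hs1, h2,
              by rw [h3, ← herase, hprod]⟩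
          · subst h
            have hred₁ : cs.IsReduced σ₁ := by
              have := hred.take σ₁.length
              rwa [List.take_left] at this
            have hu1 : u = π σ₁ * s (ι (N + 1)) := by
              rw [← hprod, cs.wordProd_append, cs.wordProd_singleton]
            exact ⟨σ₁, hs1, hred₁, by rw [hu1, cs.simple_mul_simple_cancel_right]⟩
        obtain ⟨D', hD', hpos', hsp'⟩ := ih (u * s (ι (N + 1))) hv
        have hc : ∀ k, k ≤ N →
            subwordProd cs ι (insert (N + 1) D') 1 k = subwordProd cs ι D' 1 k := by
          intro k hk
          apply subwordProd_congr
          intro l hl1 hl2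
          have : l ≠ N + 1 := by omega
          simp [Finset.mem_insert, this]
        refine ⟨insert (N + 1) D', ?_, ?_, ?_⟩
        · intro x hx
          rcases Finset.mem_insert.mp hx with h | h
          · subst h; simp
          · exact hIcc (hD' h)
        · intro k hk1 hk2
          rcases Nat.lt_or_ge k N with hkN | hkN
          · rw [hc k (by omega)]
            exact hpos' k hk1 hkN
          · have hkN' : k = N := by omega
            rw [hkN', hc N le_rfl, hsp']
            have hvs : u * s (ι (N + 1)) * s (ι (N + 1)) = u :=
              cs.simple_mul_simple_cancel_right _
            refine Relation.ReflTransGen.single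
              ⟨?_, s (ι (N + 1)), cs.isReflection_simple _, rfl⟩
            rw [hvs]
            omega
        · rw [subwordProd_succ, if_pos (Finset.mem_insert_self _ _), hc N le_rfl, hsp',
            cs.simple_mul_simple_cancel_right]

end StrongExch


/-- For a Coxeter group with a reduced expression `w = s_{i_1}⋯s_{i_N}`
and any `u ≤ w` in Bruhat order, there exists a right positive subexpression of
`s_{i_1}⋯s_{i_N}` with total product `u`. -/
theorem stmt12 {B W : Type*} [Group W] {M : CoxeterMatrix B} (cs : CoxeterSystem M W)
    (N : ℕ) (ι : ℕ → B) (hred : cs.IsReduced ((List.range' 1 N).map ι))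
    (u : W) (hu : bruhatLE cs u (cs.wordProd ((List.range' 1 N).map ι))) :
    ∃ D : Finset ℕ, D ⊆ Finset.Icc 1 N ∧ RightPositiveOn cs ι 1 N D
      ∧ subwordProd cs ι D 1 N = u := by
  obtain ⟨σ, hsub, hredσ, hprod⟩ :=
    StrongExch.subword_of_bruhatLE cs hu ((List.range' 1 N).map ι) rfl
  exact StrongExch.main_induction cs ι N u ⟨σ, hsub, hredσ, hprod⟩
end

section
/- Let W be a Coxeter group and w = s_{i_1}⋯s_{i_N} a reduced expression. If D and D′ are two right positive subexpressions of s_{i_1}⋯s_{i_N} (i.e., w^D_{≤k} ≤ w^D_{≤k} s_{i_{k+1}} for all k < N, and similarly for D′) with the same total product w^D = w^{D′}, then D = D′. -/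
private lemma bruhat_length_le {B W : Type*} [Group W] {M : CoxeterMatrix B}
    {cs : CoxeterSystem M W} {u w : W} (h : bruhatLE cs u w) :
    cs.length u ≤ cs.length w := by
  induction h with
  | refl => exact le_rfl
  | tail _ h ih => exact ih.trans h.1.le

/-- A bruhatLE step by a simple reflection strictly increases length. -/
private lemma bruhat_simple_lt {B W : Type*} [Group W] {M : CoxeterMatrix B}
    {cs : CoxeterSystem M W} {v : W} {i : B}
    (h : bruhatLE cs v (v * cs.simple i)) :
    cs.length v < cs.length (v * cs.simple i) := by
  rcases Relation.ReflTransGen.cases_head h with heq | ⟨c, hstep, htail⟩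
  · exfalso
    have : cs.simple i = 1 := by
      have := heq.symm
      rwa [left_eq_mul] at heq
    have h1 := cs.length_simple i
    rw [this, cs.length_one] at h1
    omega
  · exact lt_of_lt_of_le hstep.1 (bruhat_length_le htail)

private lemma subword_zero {B W : Type*} [Group W] {M : CoxeterMatrix B}
    (cs : CoxeterSystem M W) (ι : ℕ → B) (D : Finset ℕ) :
    subwordProd cs ι D 1 0 = 1 := by
  simp [subwordProd]

private lemma subword_succ {B W : Type*} [Group W] {M : CoxeterMatrix B}
    (cs : CoxeterSystem M W) (ι : ℕ → B) (D : Finset ℕ) (N : ℕ) :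
    subwordProd cs ι D 1 (N + 1) =
      subwordProd cs ι D 1 N * (if N + 1 ∈ D then cs.simple (ι (N + 1)) else 1) := by
  unfold subwordProd
  have h1 : N + 1 + 1 - 1 = N + 1 := rfl
  have h2 : N + 1 - 1 = N := rfl
  rw [h1, h2, List.range'_1_concat, List.filter_append, List.map_append, cs.wordProd_append]
  congr 1
  have h3 : 1 + N = N + 1 := Nat.add_comm 1 N
  by_cases h : N + 1 ∈ D <;> simp [h3, h]

private lemma key_lemma {B W : Type*} [Group W] {M : CoxeterMatrix B}
    (cs : CoxeterSystem M W) (ι : ℕ → B) :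
    ∀ N (D D' : Finset ℕ), RightPositiveOn cs ι 1 N D → RightPositiveOn cs ι 1 N D' →
      subwordProd cs ι D 1 N = subwordProd cs ι D' 1 N →
      D ∩ Finset.Icc 1 N = D' ∩ Finset.Icc 1 N := by
  intro N
  induction N with
  | zero => intro D D' _ _ _; simp
  | succ N ih =>
    intro D D' hpos hpos' hprod
    -- for a positive E, the partial product up to N goes up when multiplied by s_{ι (N+1)}
    have hstep : ∀ E : Finset ℕ, RightPositiveOn cs ι 1 (N + 1) E →
        cs.length (subwordProd cs ι E 1 N) <
          cs.length (subwordProd cs ι E 1 N * cs.simple (ι (N + 1))) := by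
      intro E hE
      rcases Nat.eq_zero_or_pos N with hN | hN
      · subst hN
        rw [subword_zero, one_mul, cs.length_one, cs.length_simple]
        omega
      · exact bruhat_simple_lt (hE N hN (Nat.lt_succ_self N))
    -- membership of N+1 is detected by the total product
    have hmem : ∀ E : Finset ℕ, RightPositiveOn cs ι 1 (N + 1) E →
        ((N + 1 ∈ E) ↔ cs.length (subwordProd cs ι E 1 (N + 1) * cs.simple (ι (N + 1))) <
          cs.length (subwordProd cs ι E 1 (N + 1))) := by
      intro E hE
      have h := hstep E hE
      rw [subword_succ]
      by_cases hm : N + 1 ∈ E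
      · rw [if_pos hm, mul_assoc, cs.simple_mul_simple_self, mul_one]
        exact iff_of_true hm h
      · rw [if_neg hm, mul_one]
        exact iff_of_false hm (not_lt.mpr h.le)
    have hiff : (N + 1 ∈ D) ↔ (N + 1 ∈ D') := by
      rw [hmem D hpos, hmem D' hpos', hprod]
    -- the partial products up to N agree
    have hv : subwordProd cs ι D 1 N = subwordProd cs ι D' 1 N := by
      have h1 := subword_succ cs ι D N
      have h2 := subword_succ cs ι D' N
      rw [hprod] at h1
      by_cases hm : N + 1 ∈ D
      · have hm' : N + 1 ∈ D' := hiff.mp hm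
        rw [h2, if_pos hm, if_pos hm'] at h1
        exact (mul_right_cancel h1.symm)
      · have hm' : N + 1 ∉ D' := fun h => hm (hiff.mpr h)
        rw [h2, if_neg hm, if_neg hm'] at h1
        exact (mul_right_cancel h1.symm)
    have hih := ih D D' (fun k h1 h2 => hpos k h1 (by omega))
      (fun k h1 h2 => hpos' k h1 (by omega)) hv
    ext x
    by_cases hx : x = N + 1
    · subst hx
      simp only [Finset.mem_inter, Finset.mem_Icc]
      constructor
      · rintro ⟨h1, _⟩; exact ⟨hiff.mp h1, by omega, le_rfl⟩
      · rintro ⟨h1, _⟩; exact ⟨hiff.mpr h1, by omega, le_rfl⟩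
    · have hx' := Finset.ext_iff.mp hih x
      simp only [Finset.mem_inter, Finset.mem_Icc] at hx' ⊢
      constructor
      · rintro ⟨h1, h2, h3⟩
        exact ⟨(hx'.mp ⟨h1, h2, by omega⟩).1, h2, h3⟩
      · rintro ⟨h1, h2, h3⟩
        exact ⟨(hx'.mpr ⟨h1, h2, by omega⟩).1, h2, h3⟩

/-- Two right positive subexpressions of a reduced expression
`s_{i_1}⋯s_{i_N}` with the same total product have the same index set. -/
theorem stmt13 {B W : Type*} [Group W] {M : CoxeterMatrix B} (cs : CoxeterSystem M W)
    (N : ℕ) (ι : ℕ → B) (hred : cs.IsReduced ((List.range' 1 N).map ι))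
    (D D' : Finset ℕ) (hD : D ⊆ Finset.Icc 1 N) (hD' : D' ⊆ Finset.Icc 1 N)
    (hpos : RightPositiveOn cs ι 1 N D) (hpos' : RightPositiveOn cs ι 1 N D')
    (hprod : subwordProd cs ι D 1 N = subwordProd cs ι D' 1 N) :
    D = D' := by
  have := key_lemma cs ι N D D' hpos hpos' hprod
  rwa [Finset.inter_eq_left.mpr hD, Finset.inter_eq_left.mpr hD'] at this
end
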